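/- Let −1 < d < 0 and let p be a probability vector on n ≥ 2 symbols with p_1 = max_i p_i ≥ 0.4. Then there exists a codeword-length vector l attaining the optimal exponential redundancy R^d_opt(p) with l_1 = 1. -/

import Mathlib

/-!
Since `d < 0`, minimising `R^d(p, l)` means maximising `F(l) = ∑ pᵢ^(1+d) (2^d)^lᵢ`. A maximiser
exists: a code with Kraft sum `< 1` may shorten its longest word, and a complete code has all
lengths `< n`, so only finitely many codes matter; for the same reason every maximiser is complete.
Take a maximiser with `l₁` least; a swap shows `l₁` is the shortest length. If `l₁ = m ≥ 2`, the
other words carry Kraft mass `1 - 2^-m ≥ 3 · 2^-m` with lengths `≥ m`, hence contain three disjoint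
groups of mass `2^-m`. The lighter two form a set `W` of probability `≤ (2/3)(1 - p₁) ≤ p₁`, as
`p₁ ≥ 0.4`. Shortening word `1` and lengthening every word of `W` by one keeps the Kraft sum, and
by Hölder `∑_W pᵢ^(1+d) 2^(d lᵢ) ≤ P(W)^(1+d) 2^(d(m-1)) ≤ p₁^(1+d) 2^(d(m-1))`, which is exactly
what makes `F` not decrease: a contradiction with the choice of `l₁`.
-/

open Real Finset

/-- A valid codeword-length vector: all lengths at least 1 and the Kraft inequality holds. -/
def IsCode (n : ℕ) (l : Fin n → ℕ) : Prop :=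
  (∀ i, 1 ≤ l i) ∧ ∑ i, (2 : ℝ) ^ (-(l i : ℝ)) ≤ 1

/-- Exponential redundancy `R^d(p,l)`. -/
noncomputable def expRedundancy (n : ℕ) (d : ℝ) (p : Fin n → ℝ) (l : Fin n → ℕ) : ℝ :=
  (1 / d) * Real.logb 2 (∑ i, (p i) ^ (1 + d) * (2 : ℝ) ^ (d * (l i : ℝ)))

/-- Optimal exponential redundancy `R^d_opt(p)`. -/
noncomputable def expRedundancyOpt (n : ℕ) (d : ℝ) (p : Fin n → ℝ) : ℝ :=
  sInf { r | ∃ l : Fin n → ℕ, IsCode n l ∧ r = expRedundancy n d p l }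

namespace Kraft

variable {ι : Type*} {s : Finset ι} {l : ι → ℕ}

theorem exists_subset_sum_eq [DecidableEq ι] {m : ℕ} (hm : ∀ i ∈ s, m ≤ l i)
    (hs : (2⁻¹ : ℝ) ^ m ≤ ∑ i ∈ s, (2⁻¹ : ℝ) ^ l i) :
    ∃ t ⊆ s, ∑ i ∈ t, (2⁻¹ : ℝ) ^ l i = 2⁻¹ ^ m := by
  obtain ⟨k, hk⟩ : ∃ k, ∀ i ∈ s, l i ≤ m + k :=
    ⟨s.sup l, fun i hi => (le_sup (f := l) hi).trans (Nat.le_add_left _ _)⟩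
  induction k generalizing m s with
  | zero =>
    obtain ⟨i, hi⟩ : s.Nonempty := nonempty_of_sum_ne_zero (lt_of_lt_of_le (by positivity) hs).ne'
    refine ⟨{i}, singleton_subset_iff.2 hi, ?_⟩
    rw [sum_singleton, le_antisymm (hk i hi) (hm i hi), add_zero]
  | succ k ih =>
    by_cases hmin : ∃ i ∈ s, l i = m
    · obtain ⟨i, hi, hli⟩ := hmin
      exact ⟨{i}, singleton_subset_iff.2 hi, by rw [sum_singleton, hli]⟩
    push Not at hmin
    have hm' : ∀ i ∈ s, m + 1 ≤ l i := fun i hi => (hm i hi).lt_of_ne' (hmin i hi)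
    have hk' : ∀ t ⊆ s, ∀ i ∈ t, l i ≤ m + 1 + k := fun t ht i hi => by
      have := hk i (ht hi); omega
    have half : (2⁻¹ : ℝ) ^ m = 2⁻¹ ^ (m + 1) + 2⁻¹ ^ (m + 1) := by ring
    have hpos : (0 : ℝ) < 2⁻¹ ^ (m + 1) := by positivity
    obtain ⟨t₁, ht₁, hsum₁⟩ := ih hm' (by linarith) (hk' s subset_rfl)
    obtain ⟨t₂, ht₂, hsum₂⟩ := ih (s := s \ t₁) (fun i hi => hm' i (mem_sdiff.1 hi).1)
      (by rw [sum_sdiff_eq_sub ht₁]; linarith) (hk' _ sdiff_subset)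
    refine ⟨t₁ ∪ t₂, union_subset ht₁ (ht₂.trans sdiff_subset), ?_⟩
    rw [sum_union (disjoint_of_subset_right ht₂ disjoint_sdiff), hsum₁, hsum₂, half]

theorem lt_add_card_of_sum_eq [DecidableEq ι] {m : ℕ} (hm : ∀ i ∈ s, m ≤ l i)
    (hs : ∑ i ∈ s, (2⁻¹ : ℝ) ^ l i = 2⁻¹ ^ m) {i : ι} (hi : i ∈ s) : l i < m + #s := by
  induction hc : #s using Nat.strong_induction_on generalizing s m with
  | _ c ih =>
  have hcard : 0 < #s := card_pos.2 ⟨i, hi⟩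
  by_cases hli : l i = m
  · omega
  have hm' : ∀ j ∈ s, m + 1 ≤ l j := by
    refine fun j hj => (hm j hj).lt_of_ne' fun hlj => ?_
    have hij : i ≠ j := by rintro rfl; exact hli hlj
    have := add_le_sum (f := fun j => (2⁻¹ : ℝ) ^ l j) (fun _ _ => by positivity) hj hi hij.symm
    simp only [hlj, hs] at this
    linarith [show (0 : ℝ) < 2⁻¹ ^ l i by positivity]
  obtain ⟨t, hts, ht⟩ := exists_subset_sum_eq hm'
    (by rw [hs, pow_succ]; linarith [show (0 : ℝ) < 2⁻¹ ^ m by positivity])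
  have hrest : ∑ j ∈ s \ t, (2⁻¹ : ℝ) ^ l j = 2⁻¹ ^ (m + 1) := by
    rw [sum_sdiff_eq_sub hts, hs, ht]; ring
  have hsplit := card_sdiff_add_card_eq_card hts
  have ht_pos : 0 < #t := card_pos.2 (nonempty_of_sum_ne_zero (by rw [ht]; positivity))
  have hrest_pos : 0 < #(s \ t) :=
    card_pos.2 (nonempty_of_sum_ne_zero (by rw [hrest]; positivity))
  by_cases hit : i ∈ t
  · have := ih #t (by omega) (fun j hj => hm' j (hts hj)) ht hit rfl
    omega
  · have := ih #(s \ t) (by omega) (fun j hj => hm' j (mem_sdiff.1 hj).1) hrest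
      (mem_sdiff.2 ⟨hi, hit⟩) rfl
    omega

theorem sum_add_le_one {L : ℕ} (hL : ∀ i ∈ s, l i ≤ L)
    (hs : ∑ i ∈ s, (2⁻¹ : ℝ) ^ l i < 1) : ∑ i ∈ s, (2⁻¹ : ℝ) ^ l i + 2⁻¹ ^ L ≤ 1 := by
  set N : ℕ := ∑ i ∈ s, 2 ^ (L - l i)
  have hN : (N : ℝ) = 2 ^ L * ∑ i ∈ s, (2⁻¹ : ℝ) ^ l i := by
    push_cast [N]
    rw [mul_sum]
    exact sum_congr rfl fun i hi => by rw [pow_sub₀ _ two_ne_zero (hL i hi), inv_pow]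
  have h2L : (0 : ℝ) < 2 ^ L := by positivity
  have hNlt : N < 2 ^ L := by exact_mod_cast (show (N : ℝ) < 2 ^ L by rw [hN]; nlinarith)
  have hN1 : (N : ℝ) + 1 ≤ 2 ^ L := by exact_mod_cast hNlt
  calc ∑ i ∈ s, (2⁻¹ : ℝ) ^ l i + 2⁻¹ ^ L = ((N : ℝ) + 1) * 2⁻¹ ^ L := by
        rw [hN, inv_pow]; field_simp
    _ ≤ 2 ^ L * 2⁻¹ ^ L := by gcongr
    _ = 1 := by rw [← mul_pow]; norm_num

theorem exists_subset_sum_eq_two_mul_and_le [DecidableEq ι] {m : ℕ} (f : ι → ℝ)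
    (hf : ∀ i ∈ s, 0 ≤ f i) (hm : ∀ i ∈ s, m ≤ l i)
    (hs : 3 * (2⁻¹ : ℝ) ^ m ≤ ∑ i ∈ s, (2⁻¹ : ℝ) ^ l i) :
    ∃ W ⊆ s, ∑ i ∈ W, (2⁻¹ : ℝ) ^ l i = 2 * 2⁻¹ ^ m ∧ 3 * ∑ i ∈ W, f i ≤ 2 * ∑ i ∈ s, f i := by
  have hpos : (0 : ℝ) < 2⁻¹ ^ m := by positivity
  obtain ⟨A, hA, hTA⟩ := exists_subset_sum_eq hm (by linarith)
  obtain ⟨B, hB, hTB⟩ := exists_subset_sum_eq (s := s \ A) (fun i hi => hm i (mem_sdiff.1 hi).1)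
    (by rw [sum_sdiff_eq_sub hA]; linarith)
  obtain ⟨C, hC, hTC⟩ := exists_subset_sum_eq (s := (s \ A) \ B)
    (fun i hi => hm i (mem_sdiff.1 (mem_sdiff.1 hi).1).1)
    (by rw [sum_sdiff_eq_sub hB, sum_sdiff_eq_sub hA]; linarith)
  have hAB : Disjoint A B := disjoint_of_subset_right hB disjoint_sdiff
  have hAC : Disjoint A C := disjoint_of_subset_right (hC.trans sdiff_subset) disjoint_sdiff
  have hBC : Disjoint B C := disjoint_of_subset_right hC disjoint_sdiff
  have hBs : B ⊆ s := hB.trans sdiff_subset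
  have hCs : C ⊆ s := hC.trans (sdiff_subset.trans sdiff_subset)
  have htotal : ∑ i ∈ A, f i + ∑ i ∈ B, f i + ∑ i ∈ C, f i ≤ ∑ i ∈ s, f i := by
    rw [← sum_union hAB, ← sum_union (disjoint_union_left.2 ⟨hAC, hBC⟩)]
    exact sum_le_sum_of_subset_of_nonneg (union_subset (union_subset hA hBs) hCs)
      fun i hi _ => hf i hi
  have pair : ∀ X Y : Finset ι, X ⊆ s → Y ⊆ s → Disjoint X Y →
      ∑ i ∈ X, (2⁻¹ : ℝ) ^ l i = 2⁻¹ ^ m → ∑ i ∈ Y, (2⁻¹ : ℝ) ^ l i = 2⁻¹ ^ m →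
      3 * (∑ i ∈ X, f i + ∑ i ∈ Y, f i) ≤ 2 * ∑ i ∈ s, f i →
      ∃ W ⊆ s, ∑ i ∈ W, (2⁻¹ : ℝ) ^ l i = 2 * 2⁻¹ ^ m ∧ 3 * ∑ i ∈ W, f i ≤ 2 * ∑ i ∈ s, f i :=
    fun X Y hX hY hXY hTX hTY h =>
      ⟨X ∪ Y, union_subset hX hY, by rw [sum_union hXY, hTX, hTY]; ring, by rwa [sum_union hXY]⟩
  -- the two lightest of the three pieces carry at most two thirds of their total weight
  rcases le_total (∑ i ∈ A, f i) (∑ i ∈ C, f i) with hAC' | hCA' <;>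
    rcases le_total (∑ i ∈ B, f i) (∑ i ∈ C, f i) with hBC' | hCB' <;>
    rcases le_total (∑ i ∈ A, f i) (∑ i ∈ B, f i) with hAB' | hBA'
  all_goals first
    | exact pair A B hA hBs hAB hTA hTB (by linarith)
    | exact pair A C hA hCs hAC hTA hTC (by linarith)
    | exact pair B C hBs hCs hBC hTB hTC (by linarith)

end Kraft

theorem Real.sum_rpow_mul_rpow_le {ι : Type*} (s : Finset ι) {f g : ι → ℝ}
    (hf : ∀ i ∈ s, 0 ≤ f i) (hg : ∀ i ∈ s, 0 ≤ g i) {a b : ℝ} (ha : 0 < a) (hb : 0 < b)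
    (hab : a + b = 1) :
    ∑ i ∈ s, f i ^ a * g i ^ b ≤ (∑ i ∈ s, f i) ^ a * (∑ i ∈ s, g i) ^ b := by
  have h := inner_le_Lp_mul_Lq_of_nonneg s (Real.HolderConjugate.inv_inv ha hb hab)
    (f := fun i => f i ^ a) (g := fun i => g i ^ b)
    (fun i hi => rpow_nonneg (hf i hi) a) (fun i hi => rpow_nonneg (hg i hi) b)
  simp only [one_div, inv_inv] at h
  convert h using 3 <;> refine sum_congr rfl fun i hi => ?_
  · rw [rpow_rpow_inv (hf i hi) ha.ne']
  · rw [rpow_rpow_inv (hg i hi) hb.ne']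

section Rebalance

variable {ι : Type*} [DecidableEq ι]

def rebalance (l : ι → ℕ) (i₀ : ι) (k : ℕ) (W : Finset ι) : ι → ℕ :=
  Function.update (fun i => if i ∈ W then l i + 1 else l i) i₀ k

@[simp]
theorem rebalance_apply_self (l : ι → ℕ) (i₀ : ι) (k : ℕ) (W : Finset ι) :
    rebalance l i₀ k W i₀ = k :=
  Function.update_self ..

theorem rebalance_apply_of_ne {l : ι → ℕ} {i i₀ : ι} (h : i ≠ i₀) {k : ℕ} {W : Finset ι} :
    rebalance l i₀ k W i = if i ∈ W then l i + 1 else l i :=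
  Function.update_of_ne h ..

variable [Fintype ι] {M : Type*} [AddCommGroup M]

theorem sum_apply_update (g : ι → ℕ → M) (l : ι → ℕ) (j : ι) (k : ℕ) :
    ∑ i, g i (Function.update l j k i) = ∑ i, g i (l i) + (g j k - g j (l j)) := by
  simp_rw [Function.apply_update (fun i => g i) l j k]
  rw [sum_update_of_mem (mem_univ j), ← add_sum_erase _ _ (mem_univ j), sdiff_singleton_eq_erase]
  abel

theorem sum_apply_rebalance (g : ι → ℕ → M) {l : ι → ℕ} {i₀ : ι} {W : Finset ι} (hW : i₀ ∉ W)
    (k : ℕ) :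
    ∑ i, g i (rebalance l i₀ k W i) =
      ∑ i, g i (l i) + (g i₀ k - g i₀ (l i₀)) + ∑ i ∈ W, (g i (l i + 1) - g i (l i)) := by
  have hlengthen : ∑ i, g i (if i ∈ W then l i + 1 else l i) =
      ∑ i, g i (l i) + ∑ i ∈ W, (g i (l i + 1) - g i (l i)) := by
    rw [← sub_eq_iff_eq_add', ← sum_sub_distrib,
      ← sum_ite_mem_eq W (fun i => g i (l i + 1) - g i (l i))]
    exact sum_congr rfl fun i _ => by split_ifs <;> simp
  rw [rebalance, sum_apply_update, hlengthen, if_neg hW]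
  abel

end Rebalance

section RedundancySum

variable {ι : Type*} [Fintype ι] {d : ℝ} {p : ι → ℝ} {l : ι → ℕ}

noncomputable def redundancySum (d : ℝ) (p : ι → ℝ) (l : ι → ℕ) : ℝ :=
  ∑ i, p i ^ (1 + d) * (2 ^ d) ^ l i

theorem expRedundancy_eq_redundancySum {n : ℕ} (d : ℝ) (p : Fin n → ℝ) (l : Fin n → ℕ) :
    expRedundancy n d p l = 1 / d * logb 2 (redundancySum d p l) := by
  simp only [expRedundancy, redundancySum, rpow_mul zero_le_two, rpow_natCast]

theorem redundancySum_pos [Nonempty ι] (hp : ∀ i, 0 < p i) : 0 < redundancySum d p l :=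
  sum_pos (fun i _ => by have := hp i; positivity) univ_nonempty

theorem redundancySum_lt_update [DecidableEq ι] (hd : d < 0) (hp : ∀ i, 0 < p i) {j : ι}
    {k : ℕ} (hk : k < l j) : redundancySum d p l < redundancySum d p (Function.update l j k) := by
  have hx : (2 : ℝ) ^ d < 1 := rpow_lt_one_of_one_lt_of_neg one_lt_two hd
  have hpow : ((2 : ℝ) ^ d) ^ l j < (2 ^ d) ^ k := pow_lt_pow_right_of_lt_one₀ (by positivity) hx hk
  have := rpow_pos_of_pos (hp j) (1 + d)
  rw [redundancySum, redundancySum, sum_apply_update (fun i k => p i ^ (1 + d) * (2 ^ d) ^ k)]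
  nlinarith

theorem redundancySum_le_comp_swap [DecidableEq ι] (hd : -1 < d) (hd0 : d ≤ 0)
    (hp : ∀ i, 0 ≤ p i) {i j : ι} (hpij : p j ≤ p i) (hlij : l j ≤ l i) :
    redundancySum d p l ≤ redundancySum d p (l ∘ Equiv.swap i j) := by
  rcases eq_or_ne i j with rfl | hij
  · simp
  have hw : p j ^ (1 + d) ≤ p i ^ (1 + d) := rpow_le_rpow (hp j) hpij (by linarith)
  have hx : ((2 : ℝ) ^ d) ^ l i ≤ (2 ^ d) ^ l j :=
    pow_le_pow_of_le_one (by positivity) (rpow_le_one_of_one_le_of_nonpos one_le_two hd0) hlij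
  rw [← sub_nonneg, redundancySum, redundancySum, ← sum_sub_distrib,
    Fintype.sum_eq_add i j hij fun k ⟨hki, hkj⟩ => by simp [Equiv.swap_apply_of_ne_of_ne hki hkj]]
  simp only [Function.comp_apply, Equiv.swap_apply_left, Equiv.swap_apply_right]
  nlinarith [mul_nonneg (sub_nonneg.2 hw) (sub_nonneg.2 hx)]

theorem redundancySum_le_rebalance [DecidableEq ι] (hd : -1 < d) (hd0 : d < 0)
    (hp : ∀ i, 0 ≤ p i) {i₀ : ι} {k : ℕ} {W : Finset ι} (hW : i₀ ∉ W) (hl : l i₀ = k + 1)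
    (hT : ∑ i ∈ W, (2⁻¹ : ℝ) ^ l i = 2⁻¹ ^ k) (hP : ∑ i ∈ W, p i ≤ p i₀) :
    redundancySum d p l ≤ redundancySum d p (rebalance l i₀ k W) := by
  unfold redundancySum
  set x : ℝ := 2 ^ d
  have hx1 : x ≤ 1 := rpow_le_one_of_one_le_of_nonpos one_le_two hd0.le
  have hxpow : ∀ j : ℕ, x ^ j = ((2⁻¹ : ℝ) ^ j) ^ (-d) := fun j => by
    rw [← rpow_natCast, ← rpow_mul zero_le_two, ← rpow_natCast, ← rpow_mul (by norm_num),
      inv_rpow zero_le_two, ← rpow_neg zero_le_two]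
    ring_nf
  have hW_le : ∑ i ∈ W, p i ^ (1 + d) * x ^ l i ≤ p i₀ ^ (1 + d) * x ^ k :=
    calc ∑ i ∈ W, p i ^ (1 + d) * x ^ l i
        = ∑ i ∈ W, p i ^ (1 + d) * ((2⁻¹ : ℝ) ^ l i) ^ (-d) := by simp_rw [hxpow]
      _ ≤ (∑ i ∈ W, p i) ^ (1 + d) * (∑ i ∈ W, (2⁻¹ : ℝ) ^ l i) ^ (-d) :=
        sum_rpow_mul_rpow_le W (fun i _ => hp i) (fun i _ => by positivity) (by linarith)
          (by linarith) (by ring)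
      _ ≤ p i₀ ^ (1 + d) * x ^ k := by
        rw [hT, ← hxpow]
        gcongr
        · exact sum_nonneg fun i _ => hp i
        · linarith
  have hlengthen : ∑ i ∈ W, (p i ^ (1 + d) * x ^ (l i + 1) - p i ^ (1 + d) * x ^ l i) =
      (x - 1) * ∑ i ∈ W, p i ^ (1 + d) * x ^ l i := by
    rw [mul_sum]
    exact sum_congr rfl fun i _ => by ring
  -- the sum changes by `(1 - x) * (p i₀ ^ (1 + d) * x ^ k - ∑ i ∈ W, p i ^ (1 + d) * x ^ l i)`
  rw [sum_apply_rebalance (fun i j => p i ^ (1 + d) * x ^ j) hW, hl, hlengthen, pow_succ]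
  nlinarith [mul_nonneg (sub_nonneg.2 hW_le) (sub_nonneg.2 hx1), rpow_nonneg (hp i₀) (1 + d),
    pow_nonneg (rpow_nonneg zero_le_two d : (0 : ℝ) ≤ x) k]

end RedundancySum

section Codes

variable {n : ℕ} {d : ℝ} {p : Fin n → ℝ} {l : Fin n → ℕ}

theorem isCode_iff : IsCode n l ↔ (∀ i, 1 ≤ l i) ∧ ∑ i, (2⁻¹ : ℝ) ^ l i ≤ 1 := by
  simp only [IsCode, rpow_neg zero_le_two, rpow_natCast, inv_pow]

theorem lt_of_sum_two_inv_pow_eq_one (h : ∑ i, (2⁻¹ : ℝ) ^ l i = 1) (i : Fin n) : l i < n := by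
  simpa using Kraft.lt_add_card_of_sum_eq (s := univ) (m := 0) (fun _ _ => Nat.zero_le _)
    (by simpa using h) (mem_univ i)

theorem IsCode.comp_perm (hl : IsCode n l) (σ : Equiv.Perm (Fin n)) : IsCode n (l ∘ σ) := by
  rw [isCode_iff] at hl ⊢
  refine ⟨fun i => hl.1 (σ i), ?_⟩
  rw [Function.comp_def, Equiv.sum_comp σ (fun i => 2⁻¹ ^ l i)]
  exact hl.2

theorem IsCode.update_pred (hl : IsCode n l) (hlt : ∑ i, (2⁻¹ : ℝ) ^ l i < 1) {j : Fin n}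
    (hj : ∀ i, l i ≤ l j) (hj2 : 2 ≤ l j) : IsCode n (Function.update l j (l j - 1)) := by
  rw [isCode_iff] at hl ⊢
  refine ⟨fun i => ?_, ?_⟩
  · rcases eq_or_ne i j with rfl | hij
    · rw [Function.update_self]; omega
    · rw [Function.update_of_ne hij]; exact hl.1 i
  · have hslack := Kraft.sum_add_le_one (s := univ) (fun i _ => hj i) hlt
    obtain ⟨k, hk⟩ : ∃ k, l j = k + 1 := ⟨l j - 1, by omega⟩
    rw [sum_apply_update (fun _ k => (2⁻¹ : ℝ) ^ k), hk, Nat.add_sub_cancel, pow_succ]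
    rw [hk, pow_succ] at hslack
    linarith

theorem IsCode.rebalance (hl : IsCode n l) {i₀ : Fin n} {k : ℕ} (hk : 1 ≤ k) {W : Finset (Fin n)}
    (hW : i₀ ∉ W) (hl₀ : l i₀ = k + 1) (hT : ∑ i ∈ W, (2⁻¹ : ℝ) ^ l i = 2⁻¹ ^ k) :
    IsCode n (rebalance l i₀ k W) := by
  rw [isCode_iff] at hl ⊢
  refine ⟨fun i => ?_, ?_⟩
  · rcases eq_or_ne i i₀ with rfl | hi
    · rwa [rebalance_apply_self]
    · rw [rebalance_apply_of_ne hi]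
      split_ifs <;> linarith [hl.1 i]
  · have hhalve : ∑ i ∈ W, ((2⁻¹ : ℝ) ^ (l i + 1) - 2⁻¹ ^ l i) = -(2⁻¹ * 2⁻¹ ^ k) := by
      rw [← hT, mul_sum, ← sum_neg_distrib]
      exact sum_congr rfl fun _ _ => by ring
    rw [sum_apply_rebalance (fun _ j => (2⁻¹ : ℝ) ^ j) hW, hhalve, hl₀, pow_succ]
    linarith [hl.2]

theorem IsCode.exists_le_redundancySum (hd : d < 0) (hp : ∀ i, 0 < p i) (hl : IsCode n l) :
    ∃ l', IsCode n l' ∧ (∀ i, l' i ≤ n) ∧ redundancySum d p l ≤ redundancySum d p l' := by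
  induction hs : ∑ i, l i using Nat.strong_induction_on generalizing l with
  | _ s ih =>
  by_cases hbdd : ∀ i, l i ≤ n
  · exact ⟨l, hl, hbdd, le_rfl⟩
  push Not at hbdd
  obtain ⟨i, hi⟩ := hbdd
  obtain ⟨j, -, hj⟩ := exists_max_image univ l ⟨i, mem_univ i⟩
  have hlt : ∑ i, (2⁻¹ : ℝ) ^ l i < 1 :=
    (isCode_iff.1 hl).2.lt_of_ne fun h => (lt_of_sum_two_inv_pow_eq_one h i).not_ge hi.le
  have hj2 : 2 ≤ l j := by have := hj i (mem_univ i); have := i.pos; omega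
  have hle : Function.update l j (l j - 1) ≤ l :=
    update_le_iff.2 ⟨Nat.sub_le _ _, fun _ _ => le_rfl⟩
  have hsum : ∑ i, Function.update l j (l j - 1) i < s :=
    hs ▸ sum_lt_sum (fun i _ => hle i) ⟨j, mem_univ j, by rw [Function.update_self]; omega⟩
  obtain ⟨l', hl', hbdd', hle'⟩ :=
    ih _ hsum (hl.update_pred hlt (fun i => hj i (mem_univ i)) hj2) rfl
  exact ⟨l', hl', hbdd', (redundancySum_lt_update hd hp (by omega)).le.trans hle'⟩

/-- For `d < 0` these are exactly the codes minimising `expRedundancy`. -/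
def IsOptimalCode (n : ℕ) (d : ℝ) (p : Fin n → ℝ) (l : Fin n → ℕ) : Prop :=
  IsCode n l ∧ ∀ l', IsCode n l' → redundancySum d p l' ≤ redundancySum d p l

theorem exists_isOptimalCode (hd : d < 0) (hp : ∀ i, 0 < p i) : ∃ l, IsOptimalCode n d p l := by
  set S : Set (Fin n → ℕ) := {l | IsCode n l ∧ ∀ i, l i ≤ n}
  have hfin : S.Finite :=
    (Set.finite_Iic fun _ => n).subset fun _ hl => hl.2
  have hconst : IsCode n fun _ => n := by
    refine isCode_iff.2 ⟨fun i => i.pos, ?_⟩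
    rw [sum_const, card_univ, Fintype.card_fin, nsmul_eq_mul, inv_pow, ← div_eq_mul_inv,
      div_le_one (by positivity)]
    exact_mod_cast Nat.lt_two_pow_self.le
  obtain ⟨l, hl, hmax⟩ :=
    Set.exists_max_image S (redundancySum d p) hfin ⟨fun _ => n, hconst, fun _ => le_rfl⟩
  refine ⟨l, hl.1, fun l' hl' => ?_⟩
  obtain ⟨l'', hl'', hbdd, hle⟩ := hl'.exists_le_redundancySum hd hp
  exact hle.trans (hmax l'' ⟨hl'', hbdd⟩)

namespace IsOptimalCode

theorem expRedundancy_eq (hl : IsOptimalCode n d p l) (hd : d < 0) (hp : ∀ i, 0 < p i)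
    (hn : 0 < n) : expRedundancy n d p l = expRedundancyOpt n d p := by
  have := Fin.pos_iff_nonempty.1 hn
  refine Eq.symm <| IsLeast.csInf_eq ⟨⟨l, hl.1, rfl⟩, ?_⟩
  rintro _ ⟨l', hl', rfl⟩
  simp only [expRedundancy_eq_redundancySum]
  exact mul_le_mul_of_nonpos_left
    (logb_le_logb_of_le one_lt_two (redundancySum_pos hp) (hl.2 l' hl')) (one_div_nonpos.2 hd.le)

theorem sum_eq_one (hl : IsOptimalCode n d p l) (hn : 2 ≤ n) (hd : d < 0) (hp : ∀ i, 0 < p i) :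
    ∑ i, (2⁻¹ : ℝ) ^ l i = 1 := by
  have hcode := isCode_iff.1 hl.1
  refine hcode.2.eq_of_not_lt fun hlt => ?_
  obtain ⟨j, -, hj⟩ := exists_max_image univ l (univ_nonempty_iff.2 ⟨⟨0, by omega⟩⟩)
  have hj2 : 2 ≤ l j := by
    by_contra! h
    have hall : ∀ i, l i = 1 := fun i =>
      le_antisymm ((hj i (mem_univ i)).trans (by omega)) (hcode.1 i)
    simp only [hall, sum_const, card_univ, Fintype.card_fin, nsmul_eq_mul, pow_one] at hlt
    have : (2 : ℝ) ≤ n := by exact_mod_cast hn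
    linarith
  exact (hl.2 _ (hl.1.update_pred hlt (fun i => hj i (mem_univ i)) hj2)).not_gt
    (redundancySum_lt_update hd hp (by omega))

theorem comp_swap (hl : IsOptimalCode n d p l) (hd : -1 < d) (hd0 : d ≤ 0)
    (hp : ∀ i, 0 ≤ p i) {i j : Fin n} (hpij : p j ≤ p i) (hlij : l j ≤ l i) :
    IsOptimalCode n d p (l ∘ Equiv.swap i j) :=
  ⟨hl.1.comp_perm _, fun l' hl' =>
    (hl.2 l' hl').trans (redundancySum_le_comp_swap hd hd0 hp hpij hlij)⟩

theorem rebalance (hl : IsOptimalCode n d p l) (hd : -1 < d) (hd0 : d < 0)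
    (hp : ∀ i, 0 ≤ p i) {i₀ : Fin n} {k : ℕ} (hk : 1 ≤ k) {W : Finset (Fin n)} (hW : i₀ ∉ W)
    (hl₀ : l i₀ = k + 1) (hT : ∑ i ∈ W, (2⁻¹ : ℝ) ^ l i = 2⁻¹ ^ k) (hP : ∑ i ∈ W, p i ≤ p i₀) :
    IsOptimalCode n d p (rebalance l i₀ k W) :=
  ⟨hl.1.rebalance hk hW hl₀ hT, fun l' hl' =>
    (hl.2 l' hl').trans (redundancySum_le_rebalance hd hd0 hp hW hl₀ hT hP)⟩

theorem exists_lt (hl : IsOptimalCode n d p l) (hn : 2 ≤ n) (hd : -1 < d) (hd0 : d < 0)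
    (hp : ∀ i, 0 < p i) (hpsum : ∑ i, p i = 1) {i₀ : Fin n} (hp₀ : 2 / 5 ≤ p i₀)
    (hmin : ∀ i, l i₀ ≤ l i) (h2 : 2 ≤ l i₀) : ∃ l', IsOptimalCode n d p l' ∧ l' i₀ < l i₀ := by
  obtain ⟨k, hk⟩ : ∃ k, l i₀ = k + 1 := ⟨l i₀ - 1, by omega⟩
  have hTrest : ∑ i ∈ univ.erase i₀, (2⁻¹ : ℝ) ^ l i = 1 - 2⁻¹ ^ (k + 1) := by
    rw [← hl.sum_eq_one hn hd0 hp, ← sum_erase_add _ _ (mem_univ i₀), hk]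
    ring
  have hPrest : ∑ i ∈ univ.erase i₀, p i = 1 - p i₀ := by
    rw [← hpsum, ← sum_erase_add _ _ (mem_univ i₀)]
    ring
  have hsmall : (2⁻¹ : ℝ) ^ (k + 1) ≤ 2⁻¹ ^ 2 :=
    pow_le_pow_of_le_one (by norm_num) (by norm_num) (by omega)
  obtain ⟨W, hWs, hTW, hPW⟩ := Kraft.exists_subset_sum_eq_two_mul_and_le p
    (fun i _ => (hp i).le) (fun i _ => hk ▸ hmin i) (by rw [hTrest]; norm_num at hsmall ⊢; linarith)
  have hW : i₀ ∉ W := fun h => by simpa using hWs h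
  refine ⟨_, hl.rebalance hd hd0 (fun i => (hp i).le) (by omega) hW hk
    (by rw [hTW, pow_succ]; ring) (by linarith), ?_⟩
  rw [rebalance_apply_self]
  omega

end IsOptimalCode

end Codes

theorem stmt_13 (n : ℕ) (hn : 2 ≤ n) (d : ℝ) (hd : -1 < d) (hd0 : d < 0)
    (p : Fin n → ℝ) (hp : ∀ i, 0 < p i) (hpsum : ∑ i, p i = 1)
    (hmax : ∀ i, p i ≤ p ⟨0, by omega⟩) (hp₁ : (0.4 : ℝ) ≤ p ⟨0, by omega⟩) :
    ∃ l : Fin n → ℕ, IsCode n l ∧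
      expRedundancy n d p l = expRedundancyOpt n d p ∧ l ⟨0, by omega⟩ = 1 := by
  set i₀ : Fin n := ⟨0, by omega⟩
  obtain ⟨l, hl, hl_min⟩ := (InvImage.wf (· i₀) wellFounded_lt).has_min
    {l | IsOptimalCode n d p l} (exists_isOptimalCode hd0 hp)
  have hl_le : ∀ i, l i₀ ≤ l i := by
    obtain ⟨j, -, hj⟩ := exists_min_image univ l ⟨i₀, mem_univ _⟩
    have hswap :=
      hl_min _ (hl.comp_swap hd hd0.le (fun i => (hp i).le) (hmax j) (hj i₀ (mem_univ _)))
    simp only [InvImage, Function.comp_apply, Equiv.swap_apply_left, not_lt] at hswap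
    exact fun i => hswap.trans (hj i (mem_univ i))
  have hl₁ : l i₀ = 1 := by
    by_contra h
    obtain ⟨l', hl', hlt⟩ := hl.exists_lt hn hd hd0 hp hpsum (by linarith) hl_le
      (by have := hl.1.1 i₀; omega)
    exact hl_min l' hl' hlt
  exact ⟨l, hl.1, hl.expRedundancy_eq hd0 hp (by omega), hl₁⟩
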